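/- arXiv:1708.04218 — 7 statements merged into one kernel-verified Lean document; each statement's English description precedes it below -/
import Mathlib

section
/- Let m, k, r, ℓ be positive integers with ℓ ≤ m, let ε ∈ (0,1), and suppose ln k ≤ m/r and εℓr ≥ 3m. If I₁,…,I_k are independently uniformly random ℓ-element subsets of [m], then the probability that there exist indices 1 ≤ i₁ < ⋯ < i_r ≤ k with |I_{i₁} ∪ ⋯ ∪ I_{i_r}| < (1-ε)m is at most e^{-m}. -/
open Finset

lemma desc_aux (s m ℓ : ℕ) (h : s ≤ m) :
    s.descFactorial ℓ * m ^ ℓ ≤ s ^ ℓ * m.descFactorial ℓ := by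
  rw [Nat.descFactorial_eq_prod_range, Nat.descFactorial_eq_prod_range]
  calc (∏ i ∈ range ℓ, (s - i)) * m ^ ℓ = ∏ i ∈ range ℓ, ((s - i) * m) := by
        rw [Finset.prod_mul_distrib, Finset.prod_const, card_range]
    _ ≤ ∏ i ∈ range ℓ, (s * (m - i)) := by
        apply Finset.prod_le_prod'
        intro i _
        calc (s - i) * m = s * m - i * m := by rw [Nat.sub_mul]
          _ ≤ s * m - i * s := Nat.sub_le_sub_left (Nat.mul_le_mul_left i h) _
          _ = s * (m - i) := by rw [Nat.mul_sub, Nat.mul_comm i s]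
    _ = s ^ ℓ * ∏ i ∈ range ℓ, (m - i) := by
        rw [Finset.prod_mul_distrib, Finset.prod_const, card_range]

lemma choose_ratio (s m ℓ : ℕ) (h : s ≤ m) :
    (s.choose ℓ : ℝ) * (m : ℝ) ^ ℓ ≤ (s : ℝ) ^ ℓ * (m.choose ℓ : ℝ) := by
  have h1 := desc_aux s m ℓ h
  rw [Nat.descFactorial_eq_factorial_mul_choose, Nat.descFactorial_eq_factorial_mul_choose] at h1
  have h2 : ℓ.factorial * (s.choose ℓ * m ^ ℓ) ≤ ℓ.factorial * (s ^ ℓ * m.choose ℓ) := by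
    calc ℓ.factorial * (s.choose ℓ * m ^ ℓ) = ℓ.factorial * s.choose ℓ * m ^ ℓ := by ring
      _ ≤ s ^ ℓ * (ℓ.factorial * m.choose ℓ) := h1
      _ = ℓ.factorial * (s ^ ℓ * m.choose ℓ) := by ring
  have h3 := Nat.le_of_mul_le_mul_left h2 (Nat.factorial_pos ℓ)
  exact_mod_cast h3

lemma B_card (m ℓ : ℕ) (S : Finset (Fin m)) :
    (Finset.univ.filter (fun s : {s : Finset (Fin m) // s.card = ℓ} => s.1 ⊆ S)).card
      = S.card.choose ℓ := by
  classical
  rw [← Finset.card_powersetCard ℓ S]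
  apply Finset.card_bij (fun s _ => s.1)
  · intro s hs
    rw [Finset.mem_powersetCard]
    exact ⟨(Finset.mem_filter.1 hs).2, s.2⟩
  · intro a ha b hb hab
    exact Subtype.ext hab
  · intro u hu
    rw [Finset.mem_powersetCard] at hu
    exact ⟨⟨u, hu.2⟩, Finset.mem_filter.2 ⟨Finset.mem_univ _, hu.1⟩, rfl⟩

lemma A_card (m k r ℓ : ℕ) (t : Finset (Fin k)) (ht : t.card = r) (S : Finset (Fin m)) :
    (Fintype.piFinset (fun i => if i ∈ t then
        Finset.univ.filter (fun s : {s : Finset (Fin m) // s.card = ℓ} => s.1 ⊆ S)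
      else Finset.univ)).card = (S.card.choose ℓ) ^ r * (m.choose ℓ) ^ (k - r) := by
  classical
  rw [Fintype.card_piFinset]
  rw [← Finset.prod_sdiff (Finset.subset_univ t)]
  have h1 : ∏ i ∈ t, (if i ∈ t then
        Finset.univ.filter (fun s : {s : Finset (Fin m) // s.card = ℓ} => s.1 ⊆ S)
      else Finset.univ).card = (S.card.choose ℓ) ^ r := by
    rw [Finset.prod_congr rfl (fun i hi => by rw [if_pos hi, B_card])]
    rw [Finset.prod_const, ht]
  have h2 : ∏ i ∈ Finset.univ \ t, (if i ∈ t then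
        Finset.univ.filter (fun s : {s : Finset (Fin m) // s.card = ℓ} => s.1 ⊆ S)
      else Finset.univ).card = (m.choose ℓ) ^ (k - r) := by
    rw [Finset.prod_congr rfl (fun i hi => by
      rw [if_neg (Finset.mem_sdiff.1 hi).2])]
    rw [Finset.prod_const, Finset.card_sdiff_of_subset (Finset.subset_univ t), ht]
    simp [Fintype.card_finset_len]
  rw [h1, h2, mul_comm]

/-- for independent uniformly random ℓ-element subsets I₁,…,I_k of [m],
the probability that some r of them have union of size below (1-ε)m is at most e^{-m}.
The probability is expressed as a ratio of cardinalities, since the uniform distribution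
on tuples of ℓ-element subsets assigns equal mass to each tuple. -/
theorem stmt_1 (m k r ℓ : ℕ) (hm : 0 < m) (hk : 0 < k) (hr : 0 < r) (hℓ : 0 < ℓ)
    (hℓm : ℓ ≤ m) (ε : ℝ) (hε0 : 0 < ε) (hε1 : ε < 1)
    (hlnk : Real.log k ≤ (m : ℝ) / r)
    (h3 : 3 * (m : ℝ) ≤ ε * ℓ * r) :
    (Nat.card {f : Fin k → {s : Finset (Fin m) // s.card = ℓ} //
        ∃ t : Finset (Fin k), t.card = r ∧
          (((t.biUnion fun i => (f i).1).card : ℝ) < (1 - ε) * m)} : ℝ) ≤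
      Real.exp (-(m : ℝ)) *
        (Nat.card (Fin k → {s : Finset (Fin m) // s.card = ℓ}) : ℝ) := by
  classical
  set α := {s : Finset (Fin m) // s.card = ℓ} with hα
  have hc : Nat.card (Fin k → α) = (m.choose ℓ) ^ k := by
    rw [Nat.card_eq_fintype_card, Fintype.card_fun, Fintype.card_finset_len, Fintype.card_fin,
      Fintype.card_fin]
  set P : (Fin k → α) → Prop := fun f =>
    ∃ t : Finset (Fin k), t.card = r ∧
      (((t.biUnion fun i => (f i).1).card : ℝ) < (1 - ε) * m) with hPdef
  have hbad : Nat.card {f : Fin k → α // P f} = (Finset.univ.filter P).card := by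
    rw [Nat.card_eq_fintype_card, Fintype.card_subtype]
  rw [hbad, hc]
  set 𝒯 : Finset (Finset (Fin k)) := Finset.univ.powersetCard r with h𝒯
  set 𝒮 : Finset (Finset (Fin m)) :=
    Finset.univ.filter (fun S : Finset (Fin m) => ((S.card : ℝ) < (1 - ε) * m)) with h𝒮
  set A : Finset (Fin k) × Finset (Fin m) → Finset (Fin k → α) := fun p =>
    Fintype.piFinset (fun i => if i ∈ p.1 then
        Finset.univ.filter (fun s : α => s.1 ⊆ p.2)
      else Finset.univ) with hA
  have hsub : Finset.univ.filter P ⊆ (𝒯 ×ˢ 𝒮).biUnion A := by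
    intro f hf
    obtain ⟨t, ht, hu⟩ := (Finset.mem_filter.1 hf).2
    refine Finset.mem_biUnion.2 ⟨(t, t.biUnion fun i => (f i).1), ?_, ?_⟩
    · rw [Finset.mem_product]
      exact ⟨Finset.mem_powersetCard.2 ⟨Finset.subset_univ t, ht⟩,
        Finset.mem_filter.2 ⟨Finset.mem_univ _, hu⟩⟩
    · rw [Fintype.mem_piFinset]
      intro i
      dsimp only
      split_ifs with hi
      · exact Finset.mem_filter.2 ⟨Finset.mem_univ _,
          Finset.subset_biUnion_of_mem (fun j => ((f j).1 : Finset (Fin m))) hi⟩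
      · exact Finset.mem_univ _
  have hcount : (Finset.univ.filter P).card ≤
      ∑ p ∈ 𝒯 ×ˢ 𝒮, (p.2.card.choose ℓ) ^ r * (m.choose ℓ) ^ (k - r) := by
    calc (Finset.univ.filter P).card ≤ ((𝒯 ×ˢ 𝒮).biUnion A).card := Finset.card_le_card hsub
      _ ≤ ∑ p ∈ 𝒯 ×ˢ 𝒮, (A p).card := Finset.card_biUnion_le
      _ = ∑ p ∈ 𝒯 ×ˢ 𝒮, (p.2.card.choose ℓ) ^ r * (m.choose ℓ) ^ (k - r) := by
          refine Finset.sum_congr rfl (fun p hp => ?_)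
          have htcard : p.1.card = r :=
            (Finset.mem_powersetCard.1 (Finset.mem_product.1 hp).1).2
          exact A_card m k r ℓ p.1 htcard p.2
  rcases lt_or_ge k r with hkr | hrk
  · -- 𝒯 is empty, so there are no bad tuples
    have hTempty : 𝒯 = ∅ := by
      rw [h𝒯, Finset.powersetCard_eq_empty]
      simpa using hkr
    rw [hTempty, Finset.empty_product, Finset.sum_empty, Nat.le_zero] at hcount
    rw [hcount]
    simp only [Nat.cast_zero]
    positivity
  · -- main case
    have hmpos : (0:ℝ) < (m:ℝ) ^ ℓ := by positivity
    have hterm : ∀ S ∈ 𝒮, (S.card.choose ℓ : ℝ) ≤ (1 - ε) ^ ℓ * (m.choose ℓ : ℝ) := by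
      intro S hS
      have hSm : ((S.card : ℝ)) < (1 - ε) * m := (Finset.mem_filter.1 hS).2
      have hSle : S.card ≤ m := by
        simpa using Finset.card_le_univ S
      have h1 := choose_ratio S.card m ℓ hSle
      have h2 : ((S.card : ℝ)) ^ ℓ ≤ ((1 - ε) * m) ^ ℓ :=
        pow_le_pow_left₀ (by positivity) (le_of_lt hSm) ℓ
      have h4 : (S.card.choose ℓ : ℝ) * (m:ℝ) ^ ℓ ≤
          ((1 - ε) ^ ℓ * (m.choose ℓ : ℝ)) * (m:ℝ) ^ ℓ := by
        calc (S.card.choose ℓ : ℝ) * (m:ℝ) ^ ℓ ≤ ((S.card : ℝ)) ^ ℓ * (m.choose ℓ : ℝ) := h1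
          _ ≤ ((1 - ε) * m) ^ ℓ * (m.choose ℓ : ℝ) := by
              apply mul_le_mul_of_nonneg_right h2 (by positivity)
          _ = ((1 - ε) ^ ℓ * (m.choose ℓ : ℝ)) * (m:ℝ) ^ ℓ := by
              rw [mul_pow]; ring
      exact le_of_mul_le_mul_right h4 hmpos
    have hcardT : (𝒯.card : ℝ) ≤ (k : ℝ) ^ r := by
      rw [h𝒯, Finset.card_powersetCard, Finset.card_univ, Fintype.card_fin]
      exact_mod_cast Nat.choose_le_pow k r
    have hcardS : ((𝒮).card : ℝ) ≤ (2:ℝ) ^ m := by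
      have : 𝒮.card ≤ 2 ^ m := by
        calc 𝒮.card ≤ Fintype.card (Finset (Fin m)) := Finset.card_le_univ 𝒮
          _ = 2 ^ m := by rw [Fintype.card_finset, Fintype.card_fin]
      exact_mod_cast this
    have hchain : ((Finset.univ.filter P).card : ℝ) ≤
        (k : ℝ) ^ r * (2:ℝ) ^ m * ((1 - ε) ^ (ℓ * r) * ((m.choose ℓ : ℝ)) ^ k) := by
      calc ((Finset.univ.filter P).card : ℝ)
          ≤ ∑ p ∈ 𝒯 ×ˢ 𝒮, ((p.2.card.choose ℓ : ℝ)) ^ r * ((m.choose ℓ : ℝ)) ^ (k - r) := by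
            exact_mod_cast hcount
        _ ≤ ∑ _p ∈ 𝒯 ×ˢ 𝒮, ((1 - ε) ^ (ℓ * r) * ((m.choose ℓ : ℝ)) ^ k) := by
            refine Finset.sum_le_sum (fun p hp => ?_)
            have hS := hterm p.2 (Finset.mem_product.1 hp).2
            calc ((p.2.card.choose ℓ : ℝ)) ^ r * ((m.choose ℓ : ℝ)) ^ (k - r)
                ≤ ((1 - ε) ^ ℓ * (m.choose ℓ : ℝ)) ^ r * ((m.choose ℓ : ℝ)) ^ (k - r) := by
                  gcongr
              _ = (1 - ε) ^ (ℓ * r) * ((m.choose ℓ : ℝ)) ^ k := by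
                  rw [mul_pow, ← pow_mul, mul_assoc, ← pow_add, Nat.add_sub_cancel' hrk]
        _ = ((𝒯 ×ˢ 𝒮).card : ℝ) * ((1 - ε) ^ (ℓ * r) * ((m.choose ℓ : ℝ)) ^ k) := by
            rw [Finset.sum_const, nsmul_eq_mul]
        _ ≤ (k : ℝ) ^ r * (2:ℝ) ^ m * ((1 - ε) ^ (ℓ * r) * ((m.choose ℓ : ℝ)) ^ k) := by
            apply mul_le_mul_of_nonneg_right _
              (mul_nonneg (pow_nonneg (by linarith) _) (by positivity))
            rw [Finset.card_product]
            push_cast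
            exact mul_le_mul hcardT hcardS (by positivity) (by positivity)
    have hkre : (k : ℝ) ^ r ≤ Real.exp m := by
      have hk0 : (0:ℝ) < k := by exact_mod_cast hk
      have h1 : (k : ℝ) ^ r = Real.exp (r * Real.log k) := by
        rw [Real.exp_nat_mul, Real.exp_log hk0]
      rw [h1]
      apply Real.exp_le_exp.2
      calc (r : ℝ) * Real.log k ≤ (r : ℝ) * ((m : ℝ) / r) := by
            apply mul_le_mul_of_nonneg_left hlnk (Nat.cast_nonneg r)
        _ = m := by
            field_simp
    have h2me : (2:ℝ) ^ m ≤ Real.exp m := by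
      have h2e : (2:ℝ) ≤ Real.exp 1 := by
        have := Real.add_one_le_exp 1
        linarith
      calc (2:ℝ) ^ m ≤ (Real.exp 1) ^ m := pow_le_pow_left₀ (by norm_num) h2e m
        _ = Real.exp m := by rw [← Real.exp_nat_mul, mul_one]
    have hee : (1 - ε) ^ (ℓ * r) ≤ Real.exp (-(3 * m)) := by
      have h1 : (1 - ε : ℝ) ≤ Real.exp (-ε) := by
        have := Real.add_one_le_exp (-ε)
        linarith
      have h0 : (0:ℝ) ≤ 1 - ε := by linarith
      calc (1 - ε) ^ (ℓ * r) ≤ (Real.exp (-ε)) ^ (ℓ * r) := pow_le_pow_left₀ h0 h1 _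
        _ = Real.exp ((ℓ * r : ℕ) * (-ε)) := by rw [Real.exp_nat_mul]
        _ ≤ Real.exp (-(3 * m)) := by
            apply Real.exp_le_exp.2
            push_cast
            nlinarith
    calc ((Finset.univ.filter P).card : ℝ)
        ≤ (k : ℝ) ^ r * (2:ℝ) ^ m * ((1 - ε) ^ (ℓ * r) * ((m.choose ℓ : ℝ)) ^ k) := hchain
      _ ≤ Real.exp m * Real.exp m * (Real.exp (-(3 * m)) * ((m.choose ℓ : ℝ)) ^ k) := by
          have h0 : (0:ℝ) ≤ 1 - ε := by linarith
          gcongr <;> positivity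
      _ = Real.exp (-(m : ℝ)) * ((m.choose ℓ : ℝ)) ^ k := by
          rw [← Real.exp_add, ← mul_assoc, ← Real.exp_add,
            show ((m:ℝ) + (m:ℝ) + -(3 * (m:ℝ))) = -(m:ℝ) by ring]
      _ = Real.exp (-(m : ℝ)) * (((m.choose ℓ) ^ k : ℕ) : ℝ) := by push_cast; ring
end

section
/- Let G be a bipartite graph with parts U and V (no isolated vertices in U), with finite label sets Σ_U, Σ_V and constraints Π_{uv} ⊆ Σ_U × Σ_V for each edge uv. Suppose there is a labeling σ_U : U → Σ_U and a multi-labeling σ_V : V → (nonempty finite subsets of Σ_V) with ∑_{v∈V} |σ_V(v)| ≤ r, such that for every edge uv there exists β ∈ σ_V(v) with (σ_U(u), β) ∈ Π_{uv}. Let |V| = q. Then there exists a (single-valued) labeling σ'_V : V → Σ_V such that the number of vertices u ∈ U with the property that (σ_U(u), σ'_V(v)) ∈ Π_{uv} for all neighbors v of u is at least (r/q)^{-q} · |U|. -/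
/-- from a multi-labeling of total size ≤ r covering every edge of a label
cover instance with |V| = q and no isolated left vertices, one can extract a single-valued
right labeling covering at least (r/q)^{-q}·|U| left vertices. -/
theorem stmt_6 {U V SU SV : Type*} [Fintype U] [Fintype V] [Fintype SV]
    (E : U → V → Prop) (hE : ∀ u, ∃ v, E u v)
    (C : U → V → Set (SU × SV))
    (q r : ℕ) (hq : Fintype.card V = q) (hr : 0 < r)
    (σU : U → SU) (σV : V → Finset SV)
    (hne : ∀ v, (σV v).Nonempty)
    (hsum : ∑ v, (σV v).card ≤ r)
    (hcov : ∀ u v, E u v → ∃ β ∈ σV v, (σU u, β) ∈ C u v) :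
    ∃ σV' : V → SV,
      (((r : ℝ) / q) ^ q)⁻¹ * (Fintype.card U : ℝ) ≤
        (Nat.card {u : U // ∀ v, E u v → (σU u, σV' v) ∈ C u v} : ℝ) := by
  classical
  -- trivial case: V empty
  rcases Nat.eq_zero_or_pos q with hq0 | hqpos
  · refine ⟨fun v => (hne v).choose, ?_⟩
    have hUempty : IsEmpty U := by
      by_contra h
      simp only [not_isEmpty_iff] at h
      obtain ⟨v, _⟩ := hE h.some
      have : 0 < Fintype.card V := Fintype.card_pos_iff.2 ⟨v⟩
      omega
    simp [Fintype.card_eq_zero, hq0]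
  -- main case
  set S := Fintype.piFinset σV with hS
  have hSne : S.Nonempty := Fintype.piFinset_nonempty.2 hne
  have hScard : S.card = ∏ v, (σV v).card := Fintype.card_piFinset σV
  have hScardpos : 0 < S.card := Finset.card_pos.2 hSne
  -- count of covered u's for a choice f
  set cnt : (V → SV) → ℕ :=
    fun f => (Finset.univ.filter (fun u : U => ∀ v, E u v → (σU u, f v) ∈ C u v)).card
    with hcnt
  -- each u is covered by at least one f ∈ S
  have hper : ∀ u : U, ∃ f ∈ S, ∀ v, E u v → (σU u, f v) ∈ C u v := by
    intro u
    refine ⟨fun v => if h : E u v then (hcov u v h).choose else (hne v).choose, ?_, ?_⟩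
    · rw [hS, Fintype.mem_piFinset]
      intro v
      by_cases h : E u v
      · simp only [dif_pos h]
        exact (hcov u v h).choose_spec.1
      · simp only [dif_neg h]
        exact (hne v).choose_spec
    · intro v hv
      simp only [dif_pos hv]
      exact (hcov u v hv).choose_spec.2
  -- total count is at least |U|
  have htot : (Fintype.card U : ℕ) ≤ ∑ f ∈ S, cnt f := by
    have : ∑ f ∈ S, cnt f = ∑ u : U, (S.filter
        (fun f => ∀ v, E u v → (σU u, f v) ∈ C u v)).card := by
      simp only [hcnt, Finset.card_filter]
      rw [Finset.sum_comm]
    rw [this]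
    rw [← Finset.card_univ, Finset.card_eq_sum_ones]
    apply Finset.sum_le_sum
    intro u _
    obtain ⟨f, hf, hcf⟩ := hper u
    exact Finset.card_pos.2 ⟨f, Finset.mem_filter.2 ⟨hf, hcf⟩⟩
  -- there is f with (card U)/S.card ≤ cnt f  (in ℝ)
  have havg : ∃ f ∈ S, (Fintype.card U : ℝ) / S.card ≤ (cnt f : ℝ) := by
    apply Finset.exists_le_of_sum_le hSne
    rw [Finset.sum_const, nsmul_eq_mul, mul_div_cancel₀]
    · exact_mod_cast htot.trans_eq (by push_cast; rfl)
    · exact_mod_cast hScardpos.ne'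
  obtain ⟨f, hfS, hf⟩ := havg
  -- AM-GM: ∏ |σV v| ≤ (r/q)^q
  have hamgm : (S.card : ℝ) ≤ ((r : ℝ) / q) ^ q := by
    have hq' : (0 : ℝ) < q := by exact_mod_cast hqpos
    set z : V → ℝ := fun v => ((σV v).card : ℝ) with hz
    have hznn : ∀ v ∈ Finset.univ, 0 ≤ z v := fun v _ => Nat.cast_nonneg _
    have hwnn : ∀ v ∈ (Finset.univ : Finset V), (0:ℝ) ≤ (q : ℝ)⁻¹ :=
      fun _ _ => by positivity
    have hwsum : ∑ _v : V, (q : ℝ)⁻¹ = 1 := by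
      rw [Finset.sum_const, nsmul_eq_mul, Finset.card_univ, hq]
      field_simp
    have h1 := Real.geom_mean_le_arith_mean_weighted Finset.univ
      (fun _ => (q : ℝ)⁻¹) z hwnn hwsum hznn
    have h2 : ∏ v, z v ^ ((q : ℝ)⁻¹) = (∏ v, z v) ^ ((q : ℝ)⁻¹) :=
      Real.finset_prod_rpow Finset.univ z hznn _
    have h3 : ∑ v, (q : ℝ)⁻¹ * z v ≤ (r : ℝ) / q := by
      rw [← Finset.mul_sum]
      rw [inv_mul_eq_div, div_le_div_iff_of_pos_right hq']
      have : ∑ v, z v = ((∑ v, (σV v).card : ℕ) : ℝ) := by push_cast [hz]; rfl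
      rw [this]
      exact_mod_cast hsum
    have h4 : (∏ v, z v) ^ ((q : ℝ)⁻¹) ≤ (r : ℝ) / q := by
      rw [← h2]; exact h1.trans h3
    have hprodnn : 0 ≤ ∏ v, z v := Finset.prod_nonneg hznn
    have h5 : ((∏ v, z v) ^ ((q : ℝ)⁻¹)) ^ q ≤ ((r : ℝ) / q) ^ q :=
      pow_le_pow_left₀ (Real.rpow_nonneg hprodnn _) h4 q
    rw [Real.rpow_inv_natCast_pow hprodnn hqpos.ne'] at h5
    rw [hScard]
    push_cast
    exact h5
  -- conclude
  refine ⟨f, ?_⟩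
  have hNat : (Nat.card {u : U // ∀ v, E u v → (σU u, f v) ∈ C u v} : ℝ) = (cnt f : ℝ) := by
    rw [Nat.card_eq_fintype_card, Fintype.card_subtype]
  rw [hNat]
  refine le_trans ?_ hf
  have hpow : (0:ℝ) < ((r : ℝ) / q) ^ q := by
    have : (0:ℝ) < (r:ℝ) := by exact_mod_cast hr
    have : (0:ℝ) < (q:ℝ) := by exact_mod_cast hqpos
    positivity
  have hSc : (0:ℝ) < (S.card : ℝ) := by exact_mod_cast hScardpos
  rw [inv_mul_eq_div, div_le_div_iff₀ hpow hSc]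
  exact mul_le_mul_of_nonneg_left hamgm (by positivity)
end

section
/- Let Γ = (G=(U,V,E), Σ_U, Σ_V, Π) be a label cover instance with no isolated vertices, and let (U', S) be the set cover instance produced by the hypercube-composition reduction: for each u ∈ U create a copy of the hypercube set system H(N_G(u), Σ_U) with ground set U^u = N_G(u)^{Σ_U} and virtual canonical sets S^u_{v,a}; for each v ∈ V and b ∈ Σ_V define S_{v,b} = ∪_{u ∈ N_G(v), (a,b) ∈ Π_{uv}} S^u_{v,a}; set U' = ∪_u U^u and S = {S_{v,b} : v ∈ V, b ∈ Σ_V}. Then the minimum size of a set cover of (U', S) equals MinLab(Γ), the minimum total number of labels ∑_{v∈V}|σ̂_V(v)| over all multi-labelings (σ_U, σ̂_V) covering every vertex of U. -/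
/-- the hypercube-composition reduction from MinLab to Set Cover is exact.
The ground set is Σ_{u ∈ U} N(u)^{Σ_U}; the set S_{v,b} contains a ground element ⟨u,x⟩
iff for some a ∈ Σ_U with (a,b) ∈ Π_{uv} the a-th coordinate of x equals v. The minimum
number of sets S_{v,b} needed to cover the ground set equals the minimum total number of
labels of a multi-labeling covering every left vertex. -/
theorem stmt_7 {U V SU SV : Type*} [Fintype U] [Fintype V] [Fintype SU] [Fintype SV]
    [Nonempty SU] [Nonempty SV]
    (E : U → V → Prop)
    (hU : ∀ u, ∃ v, E u v) (hV : ∀ v, ∃ u, E u v)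
    (C : U → V → Set (SU × SV)) :
    sInf {n : ℕ | ∃ Λ : Finset (V × SV), Λ.card = n ∧
        ∀ (u : U) (x : SU → {v : V // E u v}),
          ∃ p ∈ Λ, ∃ a : SU, (a, p.2) ∈ C u p.1 ∧ ((x a : {v : V // E u v}) : V) = p.1}
      = sInf {n : ℕ | ∃ (σU : U → SU) (σV : V → Finset SV),
          (∑ v, (σV v).card) = n ∧
          ∀ u v, E u v → ∃ b ∈ σV v, (σU u, b) ∈ C u v} := by
  classical
  set A : Set ℕ := {n : ℕ | ∃ Λ : Finset (V × SV), Λ.card = n ∧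
        ∀ (u : U) (x : SU → {v : V // E u v}),
          ∃ p ∈ Λ, ∃ a : SU, (a, p.2) ∈ C u p.1 ∧ ((x a : {v : V // E u v}) : V) = p.1}
    with hAdef
  set B : Set ℕ := {n : ℕ | ∃ (σU : U → SU) (σV : V → Finset SV),
          (∑ v, (σV v).card) = n ∧
          ∀ u v, E u v → ∃ b ∈ σV v, (σU u, b) ∈ C u v} with hBdef
  -- Direction 2: every labeling gives a cover of the same size.
  have dir2 : B ⊆ A := by
    rintro n ⟨σU, σV, hsum, hcov⟩
    refine ⟨Finset.univ.biUnion (fun v => (σV v).image (fun b => ((v, b) : V × SV))), ?_, ?_⟩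
    · rw [Finset.card_biUnion]
      · rw [← hsum]
        refine Finset.sum_congr rfl (fun v _ => ?_)
        exact Finset.card_image_of_injective _ (fun b1 b2 h => (Prod.mk.injEq _ _ _ _ ▸ h).2)
      · intro v1 _ v2 _ hne
        simp only [Finset.disjoint_left, Finset.mem_image]
        rintro p ⟨b1, _, rfl⟩ ⟨b2, _, h⟩
        exact hne (Prod.mk.injEq _ _ _ _ ▸ h).1.symm
    · intro u x
      obtain ⟨b, hb, hC⟩ := hcov u (x (σU u)) (x (σU u)).2
      refine ⟨((x (σU u) : V), b), ?_, σU u, hC, rfl⟩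
      exact Finset.mem_biUnion.2 ⟨_, Finset.mem_univ _, Finset.mem_image_of_mem _ hb⟩
  -- Direction 1: every cover gives a labeling of at most the same size.
  have dir1 : ∀ n ∈ A, ∃ m ∈ B, m ≤ n := by
    rintro n ⟨Λ, hcard, hcov⟩
    set σV : V → Finset SV := fun v => (Λ.filter (fun p => p.1 = v)).image Prod.snd with hσV
    have key : ∀ u, ∃ a : SU, ∀ v, E u v → ∃ b ∈ σV v, (a, b) ∈ C u v := by
      intro u
      by_contra h
      push_neg at h
      choose f hf1 hf2 using h
      obtain ⟨p, hpΛ, a, hC, hx⟩ := hcov u (fun a => ⟨f a, hf1 a⟩)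
      simp only at hx
      have hb : p.2 ∈ σV p.1 := by
        rw [hσV]
        exact Finset.mem_image_of_mem _ (Finset.mem_filter.2 ⟨hpΛ, rfl⟩)
      rw [← hx] at hb hC
      exact hf2 a p.2 hb hC
    choose σU hσU using key
    refine ⟨∑ v, (σV v).card, ⟨σU, σV, rfl, fun u v hE => hσU u v hE⟩, ?_⟩
    calc ∑ v, (σV v).card ≤ ∑ v, (Λ.filter (fun p => p.1 = v)).card :=
          Finset.sum_le_sum (fun v _ => Finset.card_image_le)
      _ = Λ.card :=
          (Finset.card_eq_sum_card_fiberwise (fun p _ => Finset.mem_univ p.1)).symm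
      _ = n := hcard
  rcases Set.eq_empty_or_nonempty A with hA | hA
  · have hB : B = ∅ := Set.eq_empty_of_subset_empty (hA ▸ dir2)
    rw [hA, hB]
  · apply le_antisymm
    · rcases dir1 _ (Nat.sInf_mem hA) with ⟨m, hmB, hm⟩
      exact Nat.sInf_le (dir2 (Nat.sInf_mem ⟨m, hmB⟩))
    · rcases dir1 _ (Nat.sInf_mem hA) with ⟨m, hmB, hm⟩
      exact le_trans (Nat.sInf_le hmB) hm
end

section
/- For any graph G = (V,E), define the bipartite graph B_e[G] with vertex set V × {1,2}, where (u,i) and (v,j) are adjacent if and only if i ≠ j and (either u = v or uv ∈ E). Then Biclique(B_e[G]) ≤ 2·Biclique(G) + 1, where Biclique(G) denotes the largest k such that G contains two disjoint sets S, T each of size k with every vertex of S adjacent to every vertex of T. -/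
/-
The two projections `T₁, T₂ ⊆ V` of a `k`-biclique of `B_e[G]` both have `k` elements, and any
`u ∈ T₁`, `v ∈ T₂` are equal or adjacent in `G`. Splitting `T₁ ∩ T₂` into halves `A ∪ B` and
removing `B` from `T₁` and `A` from `T₂` leaves two disjoint, fully joined sets of size at
least `⌊k/2⌋`, so `⌊k/2⌋ ≤ Biclique(G)`.
-/

/-- The bipartite graph B_e[G] on V × {1,2}: (u,i) ~ (v,j) iff i ≠ j and (u = v or uv ∈ E). -/
def BeGraph {V : Type*} (G : SimpleGraph V) : SimpleGraph (V × Fin 2) :=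
  SimpleGraph.fromRel fun p q => p.2 ≠ q.2 ∧ (p.1 = q.1 ∨ G.Adj p.1 q.1)

/-- The (balanced) biclique number of a graph: the largest k such that there are two
disjoint k-sets with all edges between them present. -/
noncomputable def bicliqueNum {α : Type*} (G : SimpleGraph α) : ℕ :=
  sSup {k | ∃ S T : Finset α, Disjoint S T ∧ S.card = k ∧ T.card = k ∧
    ∀ a ∈ S, ∀ b ∈ T, G.Adj a b}

namespace Finset

variable {α : Type*} [DecidableEq α]

theorem exists_disjoint_subset_subset_card_half {s t : Finset α} (hst : s.card = t.card) :
    ∃ s' ⊆ s, ∃ t' ⊆ t, Disjoint s' t' ∧ s.card / 2 ≤ s'.card ∧ s.card / 2 ≤ t'.card := by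
  obtain ⟨a, has, ha⟩ := exists_subset_card_eq (Nat.div_le_self (s ∩ t).card 2)
  refine ⟨s \ ((s ∩ t) \ a), sdiff_subset, t \ a, sdiff_subset, ?_, ?_, ?_⟩
  · refine disjoint_left.mpr fun x hxs hxt => ?_
    simp only [mem_sdiff, mem_inter] at hxs hxt
    tauto
  · have hi : (s ∩ t).card ≤ s.card := card_le_card inter_subset_left
    rw [card_sdiff_of_subset (sdiff_subset.trans inter_subset_left),
      card_sdiff_of_subset has, ha]
    omega
  · have hi : (s ∩ t).card ≤ t.card := card_le_card inter_subset_right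
    rw [card_sdiff_of_subset (has.trans inter_subset_right), ha, hst]
    omega

end Finset

section bicliqueNum

variable {α : Type*} {G : SimpleGraph α}

theorem bicliqueNum_le {n : ℕ}
    (h : ∀ s t : Finset α, Disjoint s t → (∀ a ∈ s, ∀ b ∈ t, G.Adj a b) →
      s.card = t.card → s.card ≤ n) :
    bicliqueNum G ≤ n :=
  csSup_le ⟨0, ∅, ∅, disjoint_bot_left, rfl, rfl, by simp⟩
    fun _ ⟨s, t, hst, hs, ht, hadj⟩ => hs ▸ h s t hst hadj (hs.trans ht.symm)

theorem min_card_le_bicliqueNum [Fintype α] {s t : Finset α} (hst : Disjoint s t)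
    (hadj : ∀ a ∈ s, ∀ b ∈ t, G.Adj a b) :
    min s.card t.card ≤ bicliqueNum G := by
  obtain ⟨s', hs', hs'card⟩ := Finset.exists_subset_card_eq (min_le_left s.card t.card)
  obtain ⟨t', ht', ht'card⟩ := Finset.exists_subset_card_eq (min_le_right s.card t.card)
  refine le_csSup ⟨Fintype.card α, fun _ ⟨u, _, _, hu, _, _⟩ => hu ▸ u.card_le_univ⟩
    ⟨s', t', hst.mono hs' ht', hs'card, ht'card, fun a ha b hb => hadj a (hs' ha) b (ht' hb)⟩

theorem card_div_two_le_bicliqueNum [Fintype α] [DecidableEq α] {s t : Finset α}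
    (hst : s.card = t.card) (hadj : ∀ a ∈ s, ∀ b ∈ t, a ≠ b → G.Adj a b) :
    s.card / 2 ≤ bicliqueNum G := by
  obtain ⟨s', hs', t', ht', hdisj, hs'card, ht'card⟩ :=
    Finset.exists_disjoint_subset_subset_card_half hst
  refine (le_min hs'card ht'card).trans (min_card_le_bicliqueNum hdisj fun a ha b hb => ?_)
  exact hadj a (hs' ha) b (ht' hb) fun hab => Finset.disjoint_left.mp hdisj ha (hab ▸ hb)

end bicliqueNum

namespace BeGraph

variable {V : Type*} {G : SimpleGraph V}

theorem adj_iff {p q : V × Fin 2} :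
    (BeGraph G).Adj p q ↔ p.2 ≠ q.2 ∧ (p.1 = q.1 ∨ G.Adj p.1 q.1) := by
  rw [BeGraph, SimpleGraph.fromRel_adj]
  constructor
  · rintro ⟨-, h | ⟨hne, heq | hadj⟩⟩
    · exact h
    · exact ⟨hne.symm, .inl heq.symm⟩
    · exact ⟨hne.symm, .inr hadj.symm⟩
  · rintro h
    exact ⟨fun hpq => h.1 (congrArg Prod.snd hpq), .inl h⟩

theorem injOn_fst_of_forall_adj {s : Finset (V × Fin 2)} {q : V × Fin 2}
    (h : ∀ p ∈ s, (BeGraph G).Adj p q) : Set.InjOn Prod.fst (s : Set (V × Fin 2)) := by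
  intro p hp p' hp' hfst
  have hne := (adj_iff.mp (h p hp)).1
  have hne' := (adj_iff.mp (h p' hp')).1
  -- `p.2` and `p'.2` both differ from `q.2` in `Fin 2`
  exact Prod.ext hfst (by omega)

end BeGraph

/-- Biclique(B_e[G]) ≤ 2·Biclique(G) + 1. -/
theorem stmt_12 {V : Type*} [Fintype V] (G : SimpleGraph V) :
    bicliqueNum (BeGraph G) ≤ 2 * bicliqueNum G + 1 := by
  classical
  refine bicliqueNum_le fun s t _ hadj hcard => ?_
  obtain rfl | ⟨p, hp⟩ := s.eq_empty_or_nonempty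
  · simp
  obtain ⟨q, hq⟩ : t.Nonempty := Finset.card_pos.mp (hcard ▸ Finset.card_pos.mpr ⟨p, hp⟩)
  have hs := Finset.card_image_of_injOn
    (BeGraph.injOn_fst_of_forall_adj fun p' hp' => hadj p' hp' q hq)
  have ht := Finset.card_image_of_injOn
    (BeGraph.injOn_fst_of_forall_adj fun q' hq' => (hadj p hp q' hq').symm)
  have hhalf := card_div_two_le_bicliqueNum (G := G) (hs.trans (hcard.trans ht.symm)) <| by
    simp only [Finset.mem_image]
    rintro _ ⟨a, ha, rfl⟩ _ ⟨b, hb, rfl⟩ hab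
    exact (BeGraph.adj_iff.mp (hadj a ha b hb)).2.resolve_left hab
  omega
end

section
/- For any graph G = (V,E), define the bipartite graph B_e[Ḡ] with vertex set V × {1,2}, where (u,i) and (v,j) are adjacent if and only if i ≠ j and (u = v or uv ∉ E). Then the maximum induced matching number of B_e[Ḡ] is at least the clique number of G, and is at most 2·Biclique(G) + 1, where Biclique(G) is the largest k such that G contains two disjoint k-sets with all edges between them present. -/
/-- The bipartite graph B_e[Ḡ] on V × {1,2}: (u,i) ~ (v,j) iff i ≠ j and (u = v or uv ∉ E). -/
def BeBarGraph {V : Type*} (G : SimpleGraph V) : SimpleGraph (V × Fin 2) :=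
  SimpleGraph.fromRel fun p q => p.2 ≠ q.2 ∧ (p.1 = q.1 ∨ ¬ G.Adj p.1 q.1)

/-- The clique number of a graph. -/
noncomputable def cliqueNum' {α : Type*} (G : SimpleGraph α) : ℕ :=
  sSup {k | ∃ S : Finset α, G.IsNClique k S}

/-- The induced matching number: the largest k admitting edges (u₁,v₁),…,(u_k,v_k) with no
cross edges among their endpoints. -/
noncomputable def imNum {α : Type*} (H : SimpleGraph α) : ℕ :=
  sSup {k | ∃ e : Fin k → α × α,
    (∀ i, H.Adj (e i).1 (e i).2) ∧
    ∀ i j, i ≠ j →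
      ¬H.Adj (e i).1 (e j).1 ∧ ¬H.Adj (e i).2 (e j).2 ∧
      ¬H.Adj (e i).1 (e j).2 ∧ ¬H.Adj (e i).2 (e j).1}

lemma beAdj {V : Type*} (G : SimpleGraph V) (p q : V × Fin 2) :
    (BeBarGraph G).Adj p q ↔ p.2 ≠ q.2 ∧ (p.1 = q.1 ∨ ¬ G.Adj p.1 q.1) := by
  simp only [BeBarGraph, SimpleGraph.fromRel_adj]
  constructor
  · rintro ⟨hne, h | h⟩
    · exact h
    · exact ⟨h.1.symm, h.2.imp Eq.symm (fun hn ha => hn ha.symm)⟩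
  · rintro ⟨h1, h2⟩
    exact ⟨fun he => h1 (congrArg Prod.snd he), Or.inl ⟨h1, h2⟩⟩

lemma imNum_bddAbove {V : Type*} [Fintype V] (G : SimpleGraph V) :
    BddAbove {k | ∃ e : Fin k → (V × Fin 2) × (V × Fin 2),
      (∀ i, (BeBarGraph G).Adj (e i).1 (e i).2) ∧
      ∀ i j, i ≠ j →
        ¬(BeBarGraph G).Adj (e i).1 (e j).1 ∧ ¬(BeBarGraph G).Adj (e i).2 (e j).2 ∧
        ¬(BeBarGraph G).Adj (e i).1 (e j).2 ∧ ¬(BeBarGraph G).Adj (e i).2 (e j).1} := by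
  refine ⟨Fintype.card (V × Fin 2), ?_⟩
  rintro k ⟨e, hAdj, hM⟩
  have hinj : Function.Injective (fun i => (e i).1) := by
    intro i j hij
    by_contra hne
    have h1 := (hM i j hne).2.2.1
    simp only at hij
    rw [hij] at h1
    exact h1 (hAdj j)
  calc k = Fintype.card (Fin k) := (Fintype.card_fin k).symm
    _ ≤ Fintype.card (V × Fin 2) := Fintype.card_le_of_injective _ hinj

/-- Clique(G) ≤ IM(B_e[Ḡ]) ≤ 2·Biclique(G) + 1. -/
theorem stmt_14 {V : Type*} [Fintype V] (G : SimpleGraph V) :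
    cliqueNum' G ≤ imNum (BeBarGraph G) ∧
      imNum (BeBarGraph G) ≤ 2 * bicliqueNum G + 1 := by
  classical
  have fin2 : ∀ x y : Fin 2, x ≠ y → (x = 0 ∧ y = 1) ∨ (x = 1 ∧ y = 0) := by decide
  constructor
  · -- lower bound
    unfold cliqueNum' imNum
    apply csSup_le
    · exact ⟨0, ∅, SimpleGraph.isNClique_empty.mpr rfl⟩
    rintro k ⟨S, hS⟩
    apply le_csSup (imNum_bddAbove G)
    have g : Fin k ≃ S := (finCongr hS.card_eq.symm).trans S.equivFin.symm
    set f : Fin k → V := fun i => (g i : V) with hf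
    have hfinj : Function.Injective f := by
      intro i j h
      exact g.injective (Subtype.coe_injective h)
    have hfmem : ∀ i, f i ∈ S := fun i => (g i).2
    refine ⟨fun i => ((f i, 0), (f i, 1)), ?_, ?_⟩
    · intro i
      rw [beAdj]; exact ⟨(by decide : (0 : Fin 2) ≠ 1), Or.inl rfl⟩
    · intro i j hij
      have hne : f i ≠ f j := fun h => hij (hfinj h)
      have hadj : G.Adj (f i) (f j) := hS.isClique (hfmem i) (hfmem j) hne
      refine ⟨?_, ?_, ?_, ?_⟩ <;> rw [beAdj] <;> push_neg <;>
        intro h <;> simp_all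
  · -- upper bound
    unfold imNum
    have hne0 : ({k | ∃ e : Fin k → (V × Fin 2) × (V × Fin 2),
      (∀ i, (BeBarGraph G).Adj (e i).1 (e i).2) ∧
      ∀ i j, i ≠ j →
        ¬(BeBarGraph G).Adj (e i).1 (e j).1 ∧ ¬(BeBarGraph G).Adj (e i).2 (e j).2 ∧
        ¬(BeBarGraph G).Adj (e i).1 (e j).2 ∧
        ¬(BeBarGraph G).Adj (e i).2 (e j).1} : Set ℕ).Nonempty :=
      ⟨0, fun i => i.elim0, fun i => i.elim0, fun i => i.elim0⟩
    apply csSup_le hne0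
    rintro k ⟨e, hAdj, hM⟩
    -- orient each edge: a i on side 0, b i on side 1
    set a : Fin k → V := fun i => if (e i).1.2 = 0 then (e i).1.1 else (e i).2.1 with ha
    set b : Fin k → V := fun i => if (e i).1.2 = 0 then (e i).2.1 else (e i).1.1 with hb
    have hpts : ∀ i, ((a i, (0 : Fin 2)) = (e i).1 ∧ (b i, (1 : Fin 2)) = (e i).2) ∨
        ((a i, (0 : Fin 2)) = (e i).2 ∧ (b i, (1 : Fin 2)) = (e i).1) := by
      intro i
      have hsnd : (e i).1.2 ≠ (e i).2.2 := ((beAdj G _ _).mp (hAdj i)).1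
      rcases fin2 _ _ hsnd with ⟨h1, h2⟩ | ⟨h1, h2⟩
      · left
        constructor <;> simp only [ha, hb, if_pos h1] <;>
          rw [Prod.ext_iff] <;> exact ⟨rfl, by simp [h1, h2]⟩
      · right
        have h1' : ¬ ((e i).1.2 = 0) := by rw [h1]; decide
        constructor <;> simp only [ha, hb, if_neg h1'] <;>
          rw [Prod.ext_iff] <;> exact ⟨rfl, by simp [h1, h2]⟩
    have hnadj : ∀ i j, i ≠ j → ¬ (BeBarGraph G).Adj (a i, (0 : Fin 2)) (b j, (1 : Fin 2)) := by
      intro i j hij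
      have hm := hM i j hij
      rcases hpts i with ⟨h1, _⟩ | ⟨h1, _⟩ <;> rcases hpts j with ⟨_, h2⟩ | ⟨_, h2⟩ <;>
        rw [h1, h2] <;> tauto
    have hkey : ∀ i j, i ≠ j → a i ≠ b j ∧ G.Adj (a i) (b j) := by
      intro i j hij
      have h := hnadj i j hij
      rw [beAdj] at h
      push_neg at h
      exact h (by decide : (0 : Fin 2) ≠ 1)
    have hedge : ∀ i, (BeBarGraph G).Adj (a i, (0 : Fin 2)) (b i, (1 : Fin 2)) := by
      intro i
      rcases hpts i with ⟨h1, h2⟩ | ⟨h1, h2⟩ <;> rw [h1, h2]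
      · exact hAdj i
      · exact (hAdj i).symm
    have hainj : Function.Injective a := by
      intro i j hij
      by_contra hne
      have h := hnadj i j hne
      rw [hij] at h
      exact h (hedge j)
    have hbinj : Function.Injective b := by
      intro i j hij
      by_contra hne
      have h := hnadj j i (fun hx => hne hx.symm)
      rw [hij] at h
      exact h (hedge j)
    -- build a biclique of size m := k / 2
    set m := k / 2 with hmdef
    have hm2 : 2 * m ≤ k := by omega
    set fI : Fin m → Fin k := fun t => ⟨t.1, by omega⟩ with hfI
    set gI : Fin m → Fin k := fun t => ⟨m + t.1, by omega⟩ with hgI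
    have hfg : ∀ t t' : Fin m, fI t ≠ gI t' := by
      intro t t' h
      have := congrArg Fin.val h
      simp only [hfI, hgI] at this
      omega
    set S : Finset V := Finset.image (fun t => a (fI t)) Finset.univ with hSdef
    set T : Finset V := Finset.image (fun t => b (gI t)) Finset.univ with hTdef
    have hfIinj : Function.Injective fI := by
      intro t t' h
      have := congrArg Fin.val h
      simp only [hfI] at this
      exact Fin.ext this
    have hgIinj : Function.Injective gI := by
      intro t t' h
      have := congrArg Fin.val h
      simp only [hgI] at this
      exact Fin.ext (by omega)
    have hSm : S.card = m := by
      rw [hSdef, Finset.card_image_of_injective _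
        (show Function.Injective (fun t => a (fI t)) from
          fun t t' h => hfIinj (hainj h))]
      simp
    have hTm : T.card = m := by
      rw [hTdef, Finset.card_image_of_injective _
        (show Function.Injective (fun t => b (gI t)) from
          fun t t' h => hgIinj (hbinj h))]
      simp
    have hDisj : Disjoint S T := by
      rw [Finset.disjoint_left]
      rintro x hxS hxT
      simp only [hSdef, hTdef, Finset.mem_image, Finset.mem_univ, true_and] at hxS hxT
      obtain ⟨t, ht⟩ := hxS
      obtain ⟨t', ht'⟩ := hxT
      exact (hkey (fI t) (gI t') (hfg t t')).1 (ht.trans ht'.symm)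
    have hAdjST : ∀ x ∈ S, ∀ y ∈ T, G.Adj x y := by
      intro x hxS y hyT
      simp only [hSdef, hTdef, Finset.mem_image, Finset.mem_univ, true_and] at hxS hyT
      obtain ⟨t, ht⟩ := hxS
      obtain ⟨t', ht'⟩ := hyT
      rw [← ht, ← ht']
      exact (hkey (fI t) (gI t') (hfg t t')).2
    have hmem : m ∈ {n | ∃ S T : Finset V, Disjoint S T ∧ S.card = n ∧ T.card = n ∧
        ∀ a ∈ S, ∀ b ∈ T, G.Adj a b} := ⟨S, T, hDisj, hSm, hTm, hAdjST⟩
    have hbdd : BddAbove {n | ∃ S T : Finset V, Disjoint S T ∧ S.card = n ∧ T.card = n ∧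
        ∀ a ∈ S, ∀ b ∈ T, G.Adj a b} := by
      refine ⟨Fintype.card V, ?_⟩
      rintro n ⟨S', _, _, hS', _, _⟩
      rw [← hS']
      exact Finset.card_le_card (Finset.subset_univ S') |>.trans (by simp)
    have hle : m ≤ bicliqueNum G := le_csSup hbdd hmem
    omega
end

section
/- (Kővári–Sós–Turán) There is a constant C such that for every positive integers n and t ≤ n, every graph on n vertices containing no complete bipartite subgraph K_{t,t} (with two disjoint t-sets fully joined) has at most C · n^{2-1/t} edges. -/
/-! Count pairs `(v, f)` where `f` is an injective `t`-tuple of neighbours of `v`. Counted by `v`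
this is `∑ᵥ d(v)ᵗ` (falling factorial); counted by `f` it is at most `nᵗ (t - 1)`, because `t`
common neighbours of the `t` distinct vertices of `f` would form a `K_{t,t}`. Since
`(d + 1 - t)ᵗ ≤ d(d - 1)⋯(d - t + 1)`, the power mean inequality bounds `∑ᵥ (d(v) + 1 - t)` by
`(t n^{2t-1})^{1/t} ≤ 2 n^{2 - 1/t}`, and `∑ᵥ d(v) ≤ ∑ᵥ (d(v) + 1 - t) + n t`. -/

open Finset

lemma card_embedding_mem_finset {α β : Type*} [Fintype α] [Fintype β] [DecidableEq β]
    (s : Finset β) :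
    #{f : α ↪ β | ∀ a, f a ∈ s} = (#s).descFactorial (Fintype.card α) := by
  let e : (α ↪ s) ≃ {f : α ↪ β // ∀ a, f a ∈ s} :=
    { toFun := fun g => ⟨g.trans (Function.Embedding.subtype _), fun a => (g a).2⟩
      invFun := fun f => Function.Embedding.codRestrict _ f.1 f.2
      left_inv := fun g => by ext; rfl
      right_inv := fun f => by ext; rfl }
  rw [← Fintype.card_coe s, ← Fintype.card_embedding_eq, Fintype.card_congr e,
    Fintype.card_subtype]

namespace SimpleGraph

variable {V : Type*} [Fintype V] (G : SimpleGraph V) [DecidableRel G.Adj]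
  {t : ℕ}

lemma exists_biclique_of_le_card_commonNeighbors (f : Fin t ↪ V)
    (h : t ≤ #{v | ∀ i, G.Adj v (f i)}) :
    ∃ S T : Finset V, Disjoint S T ∧ #S = t ∧ #T = t ∧ ∀ a ∈ S, ∀ b ∈ T, G.Adj a b := by
  obtain ⟨S, hS, hScard⟩ := exists_subset_card_eq h
  have hAdj : ∀ a ∈ S, ∀ i, G.Adj a (f i) := fun a ha => (mem_filter.1 (hS ha)).2
  refine ⟨S, univ.map f, ?_, hScard, by simp, ?_⟩
  · rw [Finset.disjoint_left]
    rintro a ha hf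
    obtain ⟨i, -, rfl⟩ := mem_map.1 hf
    exact G.irrefl (hAdj _ ha i)
  · rintro a ha _ hb
    obtain ⟨i, -, rfl⟩ := mem_map.1 hb
    exact hAdj a ha i

lemma sum_descFactorial_degree_le
    (hK : ¬ ∃ S T : Finset V, Disjoint S T ∧ #S = t ∧ #T = t ∧ ∀ a ∈ S, ∀ b ∈ T, G.Adj a b) :
    ∑ v, (G.degree v).descFactorial t ≤ (Fintype.card V).descFactorial t * (t - 1) := by
  classical
  have hcommon (f : Fin t ↪ V) : #{v | ∀ i, G.Adj v (f i)} ≤ t - 1 := by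
    have := mt (G.exists_biclique_of_le_card_commonNeighbors f) hK
    omega
  calc ∑ v, (G.degree v).descFactorial t
      = ∑ v, #{f : Fin t ↪ V | ∀ i, G.Adj v (f i)} := by
        refine sum_congr rfl fun v _ => ?_
        have := card_embedding_mem_finset (α := Fin t) (G.neighborFinset v)
        simp only [mem_neighborFinset, Fintype.card_fin, card_neighborFinset_eq_degree] at this
        exact this.symm
    _ = ∑ f : Fin t ↪ V, #{v | ∀ i, G.Adj v (f i)} := by
        simp_rw [card_filter]
        exact sum_comm
    _ ≤ ∑ _f : Fin t ↪ V, (t - 1) := sum_le_sum fun f _ => hcommon f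
    _ = (Fintype.card V).descFactorial t * (t - 1) := by
        rw [sum_const, card_univ, Fintype.card_embedding_eq, Fintype.card_fin, smul_eq_mul]

end SimpleGraph

lemma cast_le_two_mul_rpow_of_pow_le {m n t : ℕ} (ht : 0 < t)
    (h : m ^ t ≤ t * n ^ (2 * t - 1)) :
    (m : ℝ) ≤ 2 * (n : ℝ) ^ ((2 : ℝ) - 1 / t) := by
  have hpow : (2 * (n : ℝ) ^ ((2 : ℝ) - 1 / t)) ^ t = 2 ^ t * (n : ℝ) ^ (2 * t - 1) := by
    have hexp : ((2 : ℝ) - 1 / t) * t = ((2 * t - 1 : ℕ) : ℝ) := by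
      have : (t : ℝ) ≠ 0 := by positivity
      push_cast [show 1 ≤ 2 * t by omega]
      field_simp
    rw [mul_pow, ← Real.rpow_natCast ((n : ℝ) ^ ((2 : ℝ) - 1 / t)) t,
      ← Real.rpow_mul (Nat.cast_nonneg n), hexp, Real.rpow_natCast]
  rw [← pow_le_pow_iff_left₀ (Nat.cast_nonneg m) (by positivity) ht.ne', hpow]
  exact_mod_cast h.trans (Nat.mul_le_mul_right _ Nat.lt_two_pow_self.le)

lemma sum_le_four_mul_rpow_of_sum_descFactorial_le {ι : Type*} [Fintype ι] {d : ι → ℕ} {t : ℕ}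
    (ht : 0 < t) (htn : t ≤ Fintype.card ι)
    (h : ∑ i, (d i).descFactorial t ≤ Fintype.card ι ^ t * t) :
    ((∑ i, d i : ℕ) : ℝ) ≤ 4 * (Fintype.card ι : ℝ) ^ ((2 : ℝ) - 1 / t) := by
  set n := Fintype.card ι
  set x := ∑ i, (d i + 1 - t)
  have hsplit : ∑ i, d i ≤ x + n * t := by
    calc ∑ i, d i ≤ ∑ i, ((d i + 1 - t) + t) := sum_le_sum fun i _ => by omega
      _ = x + n * t := by rw [sum_add_distrib, sum_const, card_univ, smul_eq_mul]
  have hx : x ^ t ≤ t * n ^ (2 * t - 1) :=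
    calc x ^ t ≤ n ^ (t - 1) * ∑ i, (d i + 1 - t) ^ t := by
          simpa [Nat.sub_add_cancel ht] using
            pow_sum_le_card_mul_sum_pow (s := univ) (f := fun i => d i + 1 - t)
              (fun _ _ => Nat.zero_le _) (t - 1)
      _ ≤ n ^ (t - 1) * (n ^ t * t) :=
          Nat.mul_le_mul_left _ ((sum_le_sum fun i _ => Nat.pow_sub_le_descFactorial _ _).trans h)
      _ = t * n ^ (2 * t - 1) := by
          rw [show 2 * t - 1 = (t - 1) + t by omega, pow_add]; ring
  have hnt : (n * t) ^ t ≤ t * n ^ (2 * t - 1) :=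
    calc (n * t) ^ t = t * (n ^ t * t ^ (t - 1)) := by
          rw [mul_pow, ← mul_pow_sub_one ht.ne' t]; ring
      _ ≤ t * (n ^ t * n ^ (t - 1)) := by gcongr
      _ = t * n ^ (2 * t - 1) := by rw [← pow_add, show t + (t - 1) = 2 * t - 1 by omega]
  calc ((∑ i, d i : ℕ) : ℝ) ≤ (x : ℝ) + (n * t : ℕ) := by exact_mod_cast hsplit
    _ ≤ 2 * (n : ℝ) ^ ((2 : ℝ) - 1 / t) + 2 * (n : ℝ) ^ ((2 : ℝ) - 1 / t) :=
        add_le_add (cast_le_two_mul_rpow_of_pow_le ht hx) (cast_le_two_mul_rpow_of_pow_le ht hnt)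
    _ = 4 * (n : ℝ) ^ ((2 : ℝ) - 1 / t) := by ring

/-- Kővári–Sós–Turán: there is a constant C such that every K_{t,t}-free
graph on n vertices (1 ≤ t ≤ n) has at most C·n^{2-1/t} edges. -/
theorem stmt_15 :
    ∃ C : ℝ, ∀ (n t : ℕ), 0 < t → t ≤ n → ∀ G : SimpleGraph (Fin n),
      (¬ ∃ S T : Finset (Fin n), Disjoint S T ∧ S.card = t ∧ T.card = t ∧
          ∀ a ∈ S, ∀ b ∈ T, G.Adj a b) →
      (G.edgeSet.ncard : ℝ) ≤ C * (n : ℝ) ^ ((2 : ℝ) - 1 / (t : ℝ)) := by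
  refine ⟨2, fun n t ht htn G hK => ?_⟩
  classical
  have hdesc : ∑ v, (G.degree v).descFactorial t ≤ Fintype.card (Fin n) ^ t * t :=
    (G.sum_descFactorial_degree_le hK).trans
      (Nat.mul_le_mul (Nat.descFactorial_le_pow _ _) (Nat.sub_le _ _))
  have hdeg := sum_le_four_mul_rpow_of_sum_descFactorial_le ht (by simpa using htn) hdesc
  rw [G.sum_degrees_eq_twice_card_edges, Fintype.card_fin] at hdeg
  rw [← G.coe_edgeFinset, Set.ncard_coe_finset]
  push_cast at hdeg
  linarith
end

section
/- Let Γ̃ be a label cover instance with left vertices Ũ = [m], and let I₁,…,I_k ⊆ [m] be an (m,k,ℓ,r,ε)-disperser. Construct the compressed instance Γ with left vertex set U = {I₁,…,I_k}, left alphabet Σ_U = Σ_{Ũ}^ℓ (partial assignments to each block), the same right side, edges Iv whenever some u ∈ I is adjacent to v in Γ̃, and constraints requiring consistency with all original constraints inside the block. If every labeling of Γ̃ covers fewer than (1-ε)m left vertices, then every labeling of Γ covers fewer than r left vertices (i.e., MaxCov(Γ̃) < (1-ε)|Ũ| implies MaxCov(Γ) < r). -/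
/-!
If r blocks of the compressed instance are covered, their labels agree with the original
constraints on every vertex of each block, so reading the label of a vertex off any covered block
containing it yields a labeling of the original instance that covers the union of these r blocks.
By the disperser property that union has at least (1 - ε)m vertices.
-/

theorem Finset.exists_card_eq_of_le_natCard {ι : Type*} [Fintype ι] {P : ι → Prop} {r : ℕ}
    (h : r ≤ Nat.card {i // P i}) : ∃ s : Finset ι, (∀ i ∈ s, P i) ∧ s.card = r := by
  classical
  rw [Nat.card_eq_fintype_card, Fintype.card_subtype] at h
  obtain ⟨s, hsP, rfl⟩ := Finset.exists_subset_card_eq h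
  exact ⟨s, fun i hi => (Finset.mem_filter.mp (hsP hi)).2, rfl⟩

namespace LabelCover

variable {U V A B ι : Type*}

def Covers (E : U → V → Prop) (C : U → V → Set (A × B)) (σ : U → A) (τ : V → B) (u : U) :
    Prop :=
  ∀ v, E u v → (σ u, τ v) ∈ C u v

/-- The label `σ i` of a block is a labeling of all of `U`; only its restriction to `I i`
matters. -/
def BlockCovers (E : U → V → Prop) (C : U → V → Set (A × B)) (I : ι → Finset U)
    (σ : ι → U → A) (τ : V → B) (i : ι) : Prop :=
  ∀ v, ∀ u ∈ I i, E u v → (σ i u, τ v) ∈ C u v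

variable {E : U → V → Prop} {C : U → V → Set (A × B)} {τ : V → B}

theorem exists_covers_biUnion [DecidableEq U] {I : ι → Finset U} {σ : ι → U → A}
    {s : Finset ι} (hs : s.Nonempty) (hcov : ∀ i ∈ s, BlockCovers E C I σ τ i) :
    ∃ σ' : U → A, ∀ u ∈ s.biUnion I, Covers E C σ' τ u := by
  have hblock : ∀ u, ∃ i ∈ s, u ∈ s.biUnion I → u ∈ I i := by
    intro u
    by_cases hu : u ∈ s.biUnion I
    · obtain ⟨i, hi, hui⟩ := Finset.mem_biUnion.mp hu
      exact ⟨i, hi, fun _ => hui⟩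
    · exact ⟨hs.choose, hs.choose_spec, fun h => absurd h hu⟩
  choose j hjs hju using hblock
  exact ⟨fun u => σ (j u) u, fun u hu v => hcov (j u) (hjs u) v u (hju u hu)⟩

theorem card_le_natCard_covers [Finite U] {σ : U → A} {S : Finset U}
    (h : ∀ u ∈ S, Covers E C σ τ u) : S.card ≤ Nat.card {u // Covers E C σ τ u} := by
  rw [← Nat.card_eq_finsetCard]
  exact Nat.card_mono (Set.toFinite _) h

end LabelCover

open LabelCover in
theorem stmt_16_general {V A B : Type*} (m k r : ℕ) (ε : ℝ) (hε1 : ε < 1)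
    (E : Fin m → V → Prop) (C : Fin m → V → Set (A × B))
    (I : Fin k → Finset (Fin m))
    (hdisp : ∀ s : Finset (Fin k), s.card = r →
      (1 - ε) * m ≤ ((s.biUnion I).card : ℝ))
    (hsound : ∀ (σ : Fin m → A) (τ : V → B),
      ((Nat.card {u : Fin m // ∀ v, E u v → (σ u, τ v) ∈ C u v}) : ℝ) < (1 - ε) * m) :
    ∀ (σU : Fin k → Fin m → A) (τ : V → B),
      Nat.card {i : Fin k // ∀ v, ∀ u ∈ I i, E u v → (σU i u, τ v) ∈ C u v} < r := by
  intro σU τ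
  by_contra! hr
  obtain ⟨s, hs_cov, rfl⟩ :=
    Finset.exists_card_eq_of_le_natCard (P := BlockCovers E C I σU τ) hr
  have hdisp_s := hdisp s rfl
  rcases s.eq_empty_or_nonempty with rfl | hs
  · -- with no blocks the disperser bound forces `m = 0`, where `hsound` is absurd
    obtain rfl : m = 0 := by
      have : (1 - ε) * m ≤ 0 := by simpa using hdisp_s
      exact_mod_cast (nonpos_of_mul_nonpos_right this (by linarith)).antisymm m.cast_nonneg
    simpa using hsound Fin.elim0 τ
  · obtain ⟨σ, hσ⟩ := exists_covers_biUnion hs hs_cov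
    have hcover : ((s.biUnion I).card : ℝ) ≤ Nat.card {u // Covers E C σ τ u} :=
      mod_cast card_le_natCard_covers hσ
    exact (hdisp_s.trans hcover).not_gt (hsound σ τ)

/-- soundness of the left-compression via a disperser: if the blocks
I₁,…,I_k form an (m,k,ℓ,r,ε)-disperser and every labeling of the original label cover
instance covers fewer than (1-ε)m left vertices, then every labeling of the compressed
instance (whose left vertices are the blocks, a block i being covered when all original
constraints incident to vertices of I i are satisfied) covers fewer than r blocks. -/
theorem stmt_16 {V A B : Type*} (m k ℓ r : ℕ) (ε : ℝ) (hε0 : 0 < ε) (hε1 : ε < 1)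
    (E : Fin m → V → Prop) (C : Fin m → V → Set (A × B))
    (I : Fin k → Finset (Fin m)) (hcard : ∀ i, (I i).card = ℓ)
    (hdisp : ∀ s : Finset (Fin k), s.card = r →
      (1 - ε) * m ≤ ((s.biUnion I).card : ℝ))
    (hsound : ∀ (σ : Fin m → A) (τ : V → B),
      ((Nat.card {u : Fin m // ∀ v, E u v → (σ u, τ v) ∈ C u v}) : ℝ) < (1 - ε) * m) :
    ∀ (σU : Fin k → Fin m → A) (τ : V → B),
      Nat.card {i : Fin k // ∀ v, ∀ u ∈ I i, E u v → (σU i u, τ v) ∈ C u v} < r :=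
  stmt_16_general m k r ε hε1 E C I hdisp hsound
end
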